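/- arXiv:2412.05621 — 4 statements merged into one kernel-verified Lean document; each statement's English description precedes it below -/
import Mathlib

section
/- For θ > 0 let F(s;θ) denote the cdf of the uniform distribution on [0,θ]: F(s;θ) = 0 for s ≤ 0, F(s;θ) = s/θ for 0 < s < θ, and F(s;θ) = 1 for s ≥ θ. Then for all ψ, ψ₀ > 0: ∫_{−∞}^{∞} (F(s;ψ) − F(s;ψ₀))² ds = (ψ − ψ₀)²/(3ψ₀) if ψ ≤ ψ₀, and = (ψ − ψ₀)²/(3ψ) if ψ > ψ₀. -/
/-!
For `a ≤ b` the two cdfs differ only on `(0, b]`: on `[0, a]` the difference is `s (1/a − 1/b)`,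
on `[a, b]` it is `1 − s/b`, and the two polynomial integrals add up to `(b − a)² / (3b)`.
-/

open MeasureTheory Set

noncomputable def uniformCDF (θ s : ℝ) : ℝ :=
  if s ≤ 0 then 0 else if s < θ then s / θ else 1

section uniformCDF

variable {θ s : ℝ}

lemma uniformCDF_of_nonpos (hs : s ≤ 0) : uniformCDF θ s = 0 := if_pos hs

lemma uniformCDF_of_le (hθ : 0 < θ) (hs : θ ≤ s) : uniformCDF θ s = 1 := by
  rw [uniformCDF, if_neg (by linarith), if_neg (not_lt.mpr hs)]

lemma uniformCDF_eq_max_min (hθ : 0 < θ) : uniformCDF θ s = max 0 (min (s / θ) 1) := by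
  unfold uniformCDF
  split_ifs with h0 hθs
  · simp [min_le_of_left_le (div_nonpos_of_nonpos_of_nonneg h0 hθ.le)]
  · rw [min_eq_left ((div_lt_one hθ).mpr hθs).le,
      max_eq_right (div_nonneg (not_le.mp h0).le hθ.le)]
  · simp [(one_le_div hθ).mpr (not_lt.mp hθs)]

lemma continuous_uniformCDF (hθ : 0 < θ) : Continuous (uniformCDF θ) := by
  simp_rw [funext fun s => uniformCDF_eq_max_min (s := s) hθ]
  fun_prop

lemma uniformCDF_of_mem_Icc (hθ : 0 < θ) (hs : s ∈ Icc 0 θ) : uniformCDF θ s = s / θ := by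
  obtain ⟨hs0, hsθ⟩ := hs
  rcases hs0.eq_or_lt with rfl | hs0
  · simp [uniformCDF]
  rcases hsθ.lt_or_eq with hsθ | rfl
  · rw [uniformCDF, if_neg (not_le.mpr hs0), if_pos hsθ]
  · rw [uniformCDF_of_le hθ le_rfl, div_self hθ.ne']

end uniformCDF

section cramer

variable {a b : ℝ}

lemma sq_sub_uniformCDF_eq_zero_of_notMem (ha : 0 < a) (hab : a ≤ b) {s : ℝ}
    (hs : s ∉ Ioc 0 b) : (uniformCDF a s - uniformCDF b s) ^ 2 = 0 := by
  rcases not_and_or.mp hs with hs | hs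
  · simp [uniformCDF_of_nonpos (not_lt.mp hs)]
  · have hbs := (not_le.mp hs).le
    simp [uniformCDF_of_le ha (hab.trans hbs), uniformCDF_of_le (ha.trans_le hab) hbs]

lemma intervalIntegral_sq_sub_uniformCDF_zero_a (ha : 0 < a) (hab : a ≤ b) :
    ∫ s in (0 : ℝ)..a, (uniformCDF a s - uniformCDF b s) ^ 2 =
      (b - a) ^ 2 * a / (3 * b ^ 2) := by
  have hb := ha.trans_le hab
  have hEq : EqOn (fun s => (uniformCDF a s - uniformCDF b s) ^ 2)
      (fun s => (1 / a - 1 / b) ^ 2 * s ^ 2) (uIcc 0 a) := by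
    intro s hs
    rw [uIcc_of_le ha.le] at hs
    simp only [uniformCDF_of_mem_Icc ha hs, uniformCDF_of_mem_Icc hb ⟨hs.1, hs.2.trans hab⟩]
    ring
  rw [intervalIntegral.integral_congr hEq, intervalIntegral.integral_const_mul, integral_pow]
  field_simp
  ring

lemma intervalIntegral_sq_sub_uniformCDF_a_b (ha : 0 < a) (hab : a ≤ b) :
    ∫ s in a..b, (uniformCDF a s - uniformCDF b s) ^ 2 = (b - a) ^ 3 / (3 * b ^ 2) := by
  have hb := ha.trans_le hab
  have hEq : EqOn (fun s => (uniformCDF a s - uniformCDF b s) ^ 2)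
      (fun s => (1 / b) ^ 2 * (b - s) ^ 2) (uIcc a b) := by
    intro s hs
    rw [uIcc_of_le hab] at hs
    simp only [uniformCDF_of_le ha hs.1, uniformCDF_of_mem_Icc hb ⟨ha.le.trans hs.1, hs.2⟩]
    field_simp
  rw [intervalIntegral.integral_congr hEq, intervalIntegral.integral_const_mul,
    intervalIntegral.integral_comp_sub_left (fun x => x ^ 2) b, integral_pow, sub_self]
  field_simp
  ring

theorem integral_sq_sub_uniformCDF (ha : 0 < a) (hab : a ≤ b) :
    ∫ s, (uniformCDF a s - uniformCDF b s) ^ 2 = (b - a) ^ 2 / (3 * b) := by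
  have hb := ha.trans_le hab
  have hcont : Continuous fun s => (uniformCDF a s - uniformCDF b s) ^ 2 :=
    ((continuous_uniformCDF ha).sub (continuous_uniformCDF hb)).pow 2
  rw [← setIntegral_eq_integral_of_forall_compl_eq_zero
      (fun s hs => sq_sub_uniformCDF_eq_zero_of_notMem ha hab hs),
    ← intervalIntegral.integral_of_le hb.le,
    ← intervalIntegral.integral_add_adjacent_intervals (hcont.intervalIntegrable 0 a)
      (hcont.intervalIntegrable a b),
    intervalIntegral_sq_sub_uniformCDF_zero_a ha hab, intervalIntegral_sq_sub_uniformCDF_a_b ha hab]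
  field_simp
  ring

end cramer

/-- The squared Cramér distance between the cdf of `U[0,ψ]` and the cdf of `U[0,ψ₀]`:
`∫ (F(s;ψ) − F(s;ψ₀))² ds = (ψ−ψ₀)²/(3ψ₀)` if `ψ ≤ ψ₀`, and `(ψ−ψ₀)²/(3ψ)` if `ψ > ψ₀`. -/
theorem stmt_12 (F : ℝ → ℝ → ℝ)
    (hF : ∀ s θ : ℝ, 0 < θ →
      F s θ = if s ≤ 0 then 0 else if s < θ then s / θ else 1)
    (ψ ψ₀ : ℝ) (hψ : 0 < ψ) (hψ₀ : 0 < ψ₀) :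
    (ψ ≤ ψ₀ → ∫ s : ℝ, (F s ψ - F s ψ₀) ^ 2 = (ψ - ψ₀) ^ 2 / (3 * ψ₀)) ∧
    (ψ₀ < ψ → ∫ s : ℝ, (F s ψ - F s ψ₀) ^ 2 = (ψ - ψ₀) ^ 2 / (3 * ψ)) := by
  have hFψ (s : ℝ) : F s ψ = uniformCDF ψ s := hF s ψ hψ
  have hFψ₀ (s : ℝ) : F s ψ₀ = uniformCDF ψ₀ s := hF s ψ₀ hψ₀
  simp only [hFψ, hFψ₀]
  refine ⟨fun h => ?_, fun h => ?_⟩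
  · rw [integral_sq_sub_uniformCDF hψ h, sub_sq_comm]
  · simp_rw [sub_sq_comm (uniformCDF ψ _), integral_sq_sub_uniformCDF hψ₀ h.le]
end

section
/- For θ > 0 let F(s;θ) be the cdf of U[0,θ] (F(s;θ) = 0 for s ≤ 0, s/θ for 0 < s < θ, 1 for s ≥ θ), fix ψ₀ > 0, and define C(ψ) = ∫_{−∞}^{∞}(F(s;ψ) − F(s;ψ₀))² ds for ψ > 0. Then C is differentiable on (0,ψ₀) ∪ (ψ₀,∞) with C′(ψ) = 2(ψ−ψ₀)/(3ψ₀) < 0 for 0 < ψ < ψ₀ and C′(ψ) = (ψ² − ψ₀²)/(3ψ²) > 0 for ψ > ψ₀, and C(ψ₀) = 0; consequently, for every ε > 0, inf{ C(ψ) : ψ > 0, |ψ − ψ₀| ≥ ε } > 0, i.e. ψ₀ is the well-separated unique minimizer of the population Cramér objective. -/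
/-!
For `0 < a ≤ b` the two uniform cdfs differ only on `(0, b]`: by `s (1/a - 1/b)` on `(0, a]`
and by `1 - s/b` on `(a, b]`. Integrating the squares gives the closed form
`C(ψ) = (ψ - ψ₀)² / (3 max ψ ψ₀)`, from which the derivatives, `C(ψ₀) = 0` and the uniform
lower bound `ε² / (3 (ψ₀ + ε))` away from `ψ₀` are read off directly.
-/

open MeasureTheory Set intervalIntegral

noncomputable def uniformCdf (θ s : ℝ) : ℝ := if s ≤ 0 then 0 else if s < θ then s / θ else 1

lemma uniformCdf_of_nonpos {θ s : ℝ} (hs : s ≤ 0) : uniformCdf θ s = 0 := if_pos hs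

lemma uniformCdf_of_mem_Icc {θ s : ℝ} (hθ : 0 < θ) (hs : s ∈ Icc 0 θ) :
    uniformCdf θ s = s / θ := by
  rcases hs.1.eq_or_lt with rfl | hs₀
  · simp [uniformCdf]
  rcases hs.2.lt_or_eq with hsθ | rfl
  · simp [uniformCdf, hs₀.not_ge, hsθ]
  · simp [uniformCdf, hs₀.not_ge, hθ.ne']

lemma uniformCdf_of_le {θ s : ℝ} (hθ : 0 < θ) (hs : θ ≤ s) : uniformCdf θ s = 1 := by
  simp [uniformCdf, (hθ.trans_le hs).not_ge, hs.not_gt]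

lemma sq_sub_uniformCdf_of_mem_Icc_left {a b s : ℝ} (ha : 0 < a) (hab : a ≤ b)
    (hs : s ∈ Icc 0 a) :
    (uniformCdf a s - uniformCdf b s) ^ 2 = (1 / a - 1 / b) ^ 2 * s ^ 2 := by
  rw [uniformCdf_of_mem_Icc ha hs,
    uniformCdf_of_mem_Icc (ha.trans_le hab) ⟨hs.1, hs.2.trans hab⟩]
  ring

lemma sq_sub_uniformCdf_of_mem_Icc_right {a b s : ℝ} (ha : 0 < a) (hs : s ∈ Icc a b) :
    (uniformCdf a s - uniformCdf b s) ^ 2 = (b - s) ^ 2 / b ^ 2 := by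
  have hb : 0 < b := ha.trans_le (hs.1.trans hs.2)
  rw [uniformCdf_of_le ha hs.1, uniformCdf_of_mem_Icc hb ⟨ha.le.trans hs.1, hs.2⟩]
  field_simp

lemma sq_sub_uniformCdf_of_notMem_Ioc {a b s : ℝ} (ha : 0 < a) (hab : a ≤ b)
    (hs : s ∉ Ioc 0 b) : (uniformCdf a s - uniformCdf b s) ^ 2 = 0 := by
  rcases not_and_or.mp hs with hs | hs
  · simp [uniformCdf_of_nonpos (not_lt.mp hs)]
  · have hbs := (not_le.mp hs).le
    simp [uniformCdf_of_le ha (hab.trans hbs), uniformCdf_of_le (ha.trans_le hab) hbs]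

theorem integral_sq_sub_uniformCdf {a b : ℝ} (ha : 0 < a) (hab : a ≤ b) :
    ∫ s, (uniformCdf a s - uniformCdf b s) ^ 2 = (b - a) ^ 2 / (3 * b) := by
  set f := fun s ↦ (uniformCdf a s - uniformCdf b s) ^ 2
  have hb : 0 < b := ha.trans_le hab
  have hleft : EqOn f (fun s ↦ (1 / a - 1 / b) ^ 2 * s ^ 2) (uIcc 0 a) := fun s hs ↦
    sq_sub_uniformCdf_of_mem_Icc_left ha hab (by rwa [uIcc_of_le ha.le] at hs)
  have hright : EqOn f (fun s ↦ (b - s) ^ 2 / b ^ 2) (uIcc a b) := fun s hs ↦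
    sq_sub_uniformCdf_of_mem_Icc_right ha (by rwa [uIcc_of_le hab] at hs)
  have hf₁ : IntervalIntegrable f volume 0 a :=
    (intervalIntegrable_congr (hleft.mono uIoc_subset_uIcc)).mpr
      ((by fun_prop : Continuous _).intervalIntegrable _ _)
  have hf₂ : IntervalIntegrable f volume a b :=
    (intervalIntegrable_congr (hright.mono uIoc_subset_uIcc)).mpr
      ((by fun_prop : Continuous _).intervalIntegrable _ _)
  calc ∫ s, f s = ∫ s in (0)..b, f s := by
        rw [integral_of_le hb.le, setIntegral_eq_integral_of_forall_compl_eq_zero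
          fun s hs ↦ sq_sub_uniformCdf_of_notMem_Ioc ha hab hs]
    _ = (∫ s in (0)..a, (1 / a - 1 / b) ^ 2 * s ^ 2) + ∫ s in a..b, (b - s) ^ 2 / b ^ 2 := by
        rw [← integral_add_adjacent_intervals hf₁ hf₂, integral_congr hleft,
          integral_congr hright]
    _ = (b - a) ^ 2 / (3 * b) := by
        simp only [intervalIntegral.integral_const_mul, intervalIntegral.integral_div,
          integral_comp_sub_left (fun x ↦ x ^ 2), integral_pow]
        field_simp
        ring

theorem integral_sq_sub_uniformCdf_eq_div_max {a b : ℝ} (ha : 0 < a) (hb : 0 < b) :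
    ∫ s, (uniformCdf a s - uniformCdf b s) ^ 2 = (a - b) ^ 2 / (3 * max a b) := by
  rcases le_total a b with hab | hba
  · rw [integral_sq_sub_uniformCdf ha hab, max_eq_right hab, ← neg_sub, neg_sq]
  · simp_rw [← neg_sub (uniformCdf b _), neg_sq]
    rw [integral_sq_sub_uniformCdf hb hba, max_eq_left hba]

lemma hasDerivAt_sq_sub_div_const (c k x : ℝ) :
    HasDerivAt (fun x ↦ (x - c) ^ 2 / k) (2 * (x - c) / k) x := by
  simpa using (((hasDerivAt_id x).sub_const c).fun_pow 2).div_const k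

lemma hasDerivAt_sq_sub_div_mul_self (c : ℝ) {x : ℝ} (hx : x ≠ 0) :
    HasDerivAt (fun x ↦ (x - c) ^ 2 / (3 * x)) ((x ^ 2 - c ^ 2) / (3 * x ^ 2)) x := by
  have hnum : HasDerivAt (fun x ↦ (x - c) ^ 2) (2 * (x - c)) x := by
    simpa using ((hasDerivAt_id x).sub_const c).fun_pow 2
  have hden : HasDerivAt (fun x ↦ 3 * x) 3 x := by simpa using (hasDerivAt_id x).const_mul 3
  refine (hnum.div hden (mul_ne_zero three_ne_zero hx)).congr_deriv ?_
  field_simp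
  ring

lemma div_le_sq_sub_div_max {a b ε : ℝ} (hb : 0 < b) (hε : 0 < ε)
    (h : ε ≤ |a - b|) : ε ^ 2 / (3 * (b + ε)) ≤ (a - b) ^ 2 / (3 * max a b) := by
  have hmax : max a b ≤ b + |a - b| := max_le (by linarith [le_abs_self (a - b)]) (by simp)
  rw [← sq_abs (a - b)]
  calc ε ^ 2 / (3 * (b + ε)) ≤ |a - b| ^ 2 / (3 * (b + |a - b|)) := by
        rw [div_le_div_iff₀ (by positivity) (by positivity)]
        nlinarith [mul_le_mul h h hε.le (hε.le.trans h), mul_nonneg (mul_nonneg hε.le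
          (hε.le.trans h)) (sub_nonneg.mpr h)]
    _ ≤ |a - b| ^ 2 / (3 * max a b) := by
        gcongr

/-- Well-separated identification of `ψ₀` for the population Cramér objective
`C(ψ) = ∫ (F(s;ψ) − F(s;ψ₀))² ds` in the one-sided uniform model `Y ~ U[0,ψ₀]`:
`C` is differentiable off `ψ₀` with negative derivative `2(ψ−ψ₀)/(3ψ₀)` on `(0,ψ₀)`
and positive derivative `(ψ²−ψ₀²)/(3ψ²)` on `(ψ₀,∞)`, `C(ψ₀) = 0`, and
`inf { C(ψ) : ψ > 0, |ψ−ψ₀| ≥ ε } > 0` for every `ε > 0`. -/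
theorem stmt_13 (F : ℝ → ℝ → ℝ)
    (hF : ∀ s θ : ℝ, 0 < θ →
      F s θ = if s ≤ 0 then 0 else if s < θ then s / θ else 1)
    (ψ₀ : ℝ) (hψ₀ : 0 < ψ₀) (C : ℝ → ℝ)
    (hC : ∀ ψ : ℝ, C ψ = ∫ s : ℝ, (F s ψ - F s ψ₀) ^ 2) :
    (∀ ψ : ℝ, 0 < ψ → ψ < ψ₀ →
      HasDerivAt C (2 * (ψ - ψ₀) / (3 * ψ₀)) ψ ∧ 2 * (ψ - ψ₀) / (3 * ψ₀) < 0) ∧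
    (∀ ψ : ℝ, ψ₀ < ψ →
      HasDerivAt C ((ψ ^ 2 - ψ₀ ^ 2) / (3 * ψ ^ 2)) ψ ∧
        0 < (ψ ^ 2 - ψ₀ ^ 2) / (3 * ψ ^ 2)) ∧
    C ψ₀ = 0 ∧
    (∀ ε : ℝ, 0 < ε → ∃ δ : ℝ, 0 < δ ∧ ∀ ψ : ℝ, 0 < ψ → ε ≤ |ψ - ψ₀| → δ ≤ C ψ) := by
  have hF' : ∀ s θ, 0 < θ → F s θ = uniformCdf θ s := hF
  have hC' : ∀ ψ, 0 < ψ → C ψ = (ψ - ψ₀) ^ 2 / (3 * max ψ ψ₀) := fun ψ hψ ↦ by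
    simp only [hC, hF' _ ψ hψ, hF' _ ψ₀ hψ₀, integral_sq_sub_uniformCdf_eq_div_max hψ hψ₀]
  refine ⟨fun ψ hψ hψψ₀ ↦ ⟨?_, ?_⟩, fun ψ hψ₀ψ ↦ ⟨?_, ?_⟩, ?_, fun ε hε ↦ ?_⟩
  · refine (hasDerivAt_sq_sub_div_const ψ₀ _ ψ).congr_of_eventuallyEq ?_
    filter_upwards [Ioo_mem_nhds hψ hψψ₀] with x hx
    rw [hC' x hx.1, max_eq_right hx.2.le]
  · exact div_neg_of_neg_of_pos (by linarith) (by linarith)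
  · refine (hasDerivAt_sq_sub_div_mul_self ψ₀ (hψ₀.trans hψ₀ψ).ne').congr_of_eventuallyEq ?_
    filter_upwards [Ioi_mem_nhds hψ₀ψ] with x hx
    rw [hC' x (hψ₀.trans hx), max_eq_left hx.le]
  · exact div_pos (by nlinarith) (by nlinarith)
  · simp [hC' ψ₀ hψ₀]
  · exact ⟨ε ^ 2 / (3 * (ψ₀ + ε)), div_pos (by positivity) (by linarith), fun ψ hψ h ↦
      (hC' ψ hψ).symm ▸ div_le_sq_sub_div_max hψ₀ hε h⟩
end

section
/- For θ ∈ (0,1) let F(y;θ) be the cdf of the two-sided uniform model: F(y;θ) = 0 for y ≤ 0, F(y;θ) = y/(4θ) for 0 < y ≤ θ, F(y;θ) = 1 − 3(1−y)/(4(1−θ)) for θ < y ≤ 1, and F(y;θ) = 1 for y > 1. Fix ψ₀ ∈ (0,1) and define D(y;ψ₀) = −y/(4ψ₀²) for 0 < y < ψ₀, D(y;ψ₀) = −3(1−y)/(4(1−ψ₀)²) for ψ₀ < y < 1, and D(y;ψ₀) = 0 otherwise (including at y = ψ₀), and set R(y;ψ,ψ₀) = F(y;ψ) − F(y;ψ₀)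 − (ψ−ψ₀)D(y;ψ₀). Then for all ψ ∈ (0,1): ∫_{−∞}^{∞} R(y;ψ,ψ₀)² dy = −(ψ−ψ₀)³(4ψ(ψ₀−1) + 12ψ₀² − 4ψ₀ + 1)/(48(ψ−1)(ψ₀−1)ψ₀²) if ψ < ψ₀, and = (ψ−ψ₀)³(12ψψ₀ + 4ψ₀² − 8ψ₀ + 1)/(48ψψ₀(1−ψ₀)²) if ψ ≥ ψ₀. In particular, ∫ R(y;ψ,ψ₀)² dy / (ψ−ψ₀)² → 0 as ψ → ψ₀, for every value of ψ₀ ∈ (0,1). -/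
/-!
On each of the three intervals cut out of `(0,1]` by `ψ` and `ψ₀` the remainder `R(·;ψ,ψ₀)` is
affine in `y`, so `∫ R²` is an explicit rational function of `ψ, ψ₀`. On the two outer intervals
the remainder is of order `(ψ-ψ₀)²`; on the middle one, whose length is `|ψ-ψ₀|`, the jump of
`D(·;ψ₀)` at `ψ₀` (inherited from the jump of the density) only makes it of order `|ψ-ψ₀|`.
Hence `∫ R² = O(|ψ-ψ₀|³)`, which is `o((ψ-ψ₀)²)`.
-/

open MeasureTheory Topology Filter Set

theorem integral_sq_affine (p q a b : ℝ) :
    ∫ t in a..b, (p + q * t) ^ 2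
      = (p ^ 2 * b + p * q * b ^ 2 + q ^ 2 * b ^ 3 / 3)
        - (p ^ 2 * a + p * q * a ^ 2 + q ^ 2 * a ^ 3 / 3) := by
  refine intervalIntegral.integral_eq_sub_of_hasDerivAt
    (f := fun t => p ^ 2 * t + p * q * t ^ 2 + q ^ 2 * t ^ 3 / 3) (fun x _ => ?_)
    ((by fun_prop : Continuous fun t : ℝ => (p + q * t) ^ 2).intervalIntegrable a b)
  refine ((((hasDerivAt_id x).const_mul (p ^ 2)).add
    ((hasDerivAt_pow 2 x).const_mul (p * q))).add
    (((hasDerivAt_pow 3 x).const_mul (q ^ 2)).div_const 3)).congr_deriv ?_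
  push_cast
  ring

theorem intervalIntegral_sq_of_eqOn_affine {g : ℝ → ℝ} {a b p q : ℝ} (hab : a ≤ b)
    (hg : EqOn g (fun y => p + q * y) (Ioo a b)) :
    IntervalIntegrable (fun y => g y ^ 2) volume a b ∧
      ∫ y in a..b, g y ^ 2
        = (p ^ 2 * b + p * q * b ^ 2 + q ^ 2 * b ^ 3 / 3)
          - (p ^ 2 * a + p * q * a ^ 2 + q ^ 2 * a ^ 3 / 3) := by
  have hsq : EqOn (fun y => (p + q * y) ^ 2) (fun y => g y ^ 2) (uIoo a b) := by
    rw [uIoo_of_le hab]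
    exact fun y hy => by simp only [hg hy]
  refine ⟨((by fun_prop : Continuous fun t : ℝ => (p + q * t) ^ 2).intervalIntegrable a b).congr_uIoo
    hsq, ?_⟩
  rw [← intervalIntegral.integral_congr_uIoo hsq, integral_sq_affine]

theorem integral_eq_add_add_of_eq_zero_off_Ioc {g : ℝ → ℝ} {c d a b : ℝ} (hcd : c ≤ d)
    (hg : ∀ y, y ∉ Ioc c d → g y = 0) (hca : IntervalIntegrable g volume c a)
    (hab : IntervalIntegrable g volume a b) (hbd : IntervalIntegrable g volume b d) :
    ∫ y, g y = (∫ y in c..a, g y) + (∫ y in a..b, g y) + (∫ y in b..d, g y) := by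
  rw [intervalIntegral.integral_add_adjacent_intervals hca hab,
    intervalIntegral.integral_add_adjacent_intervals (hca.trans hab) hbd,
    intervalIntegral.integral_of_le hcd, setIntegral_eq_integral_of_forall_compl_eq_zero hg]

theorem tendsto_div_sq_of_eventuallyEq_cube_mul {f g : ℝ → ℝ} {a : ℝ} {l : Filter ℝ}
    (hl : l ≤ 𝓝[≠] a) (hf : ∀ᶠ x in l, f x = (x - a) ^ 3 * g x) (hg : ContinuousAt g a) :
    Tendsto (fun x => f x / (x - a) ^ 2) l (𝓝 0) := by
  have hlim : Tendsto (fun x => (x - a) * g x) (𝓝 a) (𝓝 0) := by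
    simpa using ((continuous_sub_right a).continuousAt.fun_mul hg).tendsto
  refine (hlim.mono_left (hl.trans nhdsWithin_le_nhds)).congr' ?_
  filter_upwards [hf, hl self_mem_nhdsWithin] with x hfx hx
  rw [hfx]
  field_simp [sub_ne_zero.2 (show x ≠ a from hx)]

namespace TwoSidedUniform

noncomputable def cdf (θ y : ℝ) : ℝ :=
  if y ≤ 0 then 0 else if y ≤ θ then y / (4 * θ)
    else if y ≤ 1 then 1 - 3 * (1 - y) / (4 * (1 - θ)) else 1

noncomputable def cdfDeriv (ψ₀ y : ℝ) : ℝ :=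
  if 0 < y ∧ y < ψ₀ then -y / (4 * ψ₀ ^ 2)
  else if ψ₀ < y ∧ y < 1 then -(3 * (1 - y)) / (4 * (1 - ψ₀) ^ 2) else 0

noncomputable def remainder (ψ₀ ψ y : ℝ) : ℝ :=
  cdf ψ y - cdf ψ₀ y - (ψ - ψ₀) * cdfDeriv ψ₀ y

variable {θ ψ ψ₀ y : ℝ}

theorem cdf_of_nonpos (hy : y ≤ 0) : cdf θ y = 0 := if_pos hy

theorem cdf_of_le (hy : 0 < y) (hyθ : y ≤ θ) : cdf θ y = y / (4 * θ) := by
  rw [cdf, if_neg hy.not_ge, if_pos hyθ]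

theorem cdf_of_lt_of_le_one (hθ : 0 ≤ θ) (hθy : θ < y) (hy : y ≤ 1) :
    cdf θ y = 1 - 3 * (1 - y) / (4 * (1 - θ)) := by
  rw [cdf, if_neg (by linarith), if_neg hθy.not_ge, if_pos hy]

theorem cdf_of_one_lt (hθ : θ ≤ 1) (hy : 1 < y) : cdf θ y = 1 := by
  rw [cdf, if_neg (by linarith), if_neg (by linarith), if_neg hy.not_ge]

theorem cdfDeriv_of_lt (hy : 0 < y) (hyψ₀ : y < ψ₀) : cdfDeriv ψ₀ y = -y / (4 * ψ₀ ^ 2) :=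
  if_pos ⟨hy, hyψ₀⟩

theorem cdfDeriv_of_gt (hψ₀y : ψ₀ < y) (hy : y < 1) :
    cdfDeriv ψ₀ y = -(3 * (1 - y)) / (4 * (1 - ψ₀) ^ 2) := by
  rw [cdfDeriv, if_neg (fun h => h.2.not_gt hψ₀y), if_pos ⟨hψ₀y, hy⟩]

theorem cdfDeriv_of_nonpos (hψ₀ : 0 ≤ ψ₀) (hy : y ≤ 0) : cdfDeriv ψ₀ y = 0 := by
  rw [cdfDeriv, if_neg (fun h => h.1.not_ge hy), if_neg (fun h => by linarith [h.1])]

theorem cdfDeriv_of_one_le (hψ₀ : ψ₀ ≤ 1) (hy : 1 ≤ y) : cdfDeriv ψ₀ y = 0 := by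
  rw [cdfDeriv, if_neg (fun h => by linarith [h.2]), if_neg (fun h => h.2.not_ge hy)]

theorem remainder_eq_zero_of_notMem_Ioc (hψ : ψ ∈ Icc 0 1) (hψ₀ : ψ₀ ∈ Icc 0 1)
    (hy : y ∉ Ioc 0 1) : remainder ψ₀ ψ y = 0 := by
  rcases not_and_or.1 hy with hy | hy
  · rw [remainder, cdf_of_nonpos (not_lt.1 hy), cdf_of_nonpos (not_lt.1 hy),
      cdfDeriv_of_nonpos hψ₀.1 (not_lt.1 hy)]
    ring
  · rw [remainder, cdf_of_one_lt hψ.2 (not_le.1 hy), cdf_of_one_lt hψ₀.2 (not_le.1 hy),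
      cdfDeriv_of_one_le hψ₀.2 (not_le.1 hy).le]
    ring

theorem remainder_of_lt_of_lt (hy : 0 < y) (hyψ : y < ψ) (hyψ₀ : y < ψ₀) :
    remainder ψ₀ ψ y = 0 + (ψ - ψ₀) ^ 2 / (4 * ψ * ψ₀ ^ 2) * y := by
  have h1 : ψ ≠ 0 := by linarith
  have h2 : ψ₀ ≠ 0 := by linarith
  rw [remainder, cdf_of_le hy hyψ.le, cdf_of_le hy hyψ₀.le, cdfDeriv_of_lt hy hyψ₀]
  field_simp
  ring

theorem remainder_of_gt_of_gt (hψ : 0 ≤ ψ) (hψ₀ : 0 ≤ ψ₀) (hψy : ψ < y) (hψ₀y : ψ₀ < y)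
    (hy : y < 1) :
    remainder ψ₀ ψ y = -(3 * (ψ - ψ₀) ^ 2) / (4 * (1 - ψ) * (1 - ψ₀) ^ 2)
      + 3 * (ψ - ψ₀) ^ 2 / (4 * (1 - ψ) * (1 - ψ₀) ^ 2) * y := by
  have h1 : 1 - ψ ≠ 0 := by linarith
  have h2 : 1 - ψ₀ ≠ 0 := by linarith
  rw [remainder, cdf_of_lt_of_le_one hψ hψy hy.le, cdf_of_lt_of_le_one hψ₀ hψ₀y hy.le,
    cdfDeriv_of_gt hψ₀y hy]
  field_simp
  ring

theorem remainder_of_gt_of_lt (hψ : 0 ≤ ψ) (hψy : ψ < y) (hyψ₀ : y < ψ₀) (hψ₀ : ψ₀ ≤ 1) :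
    remainder ψ₀ ψ y = (1 - 4 * ψ) / (4 * (1 - ψ))
      + (3 * ψ₀ ^ 2 + 2 * ψ * ψ₀ - 2 * ψ₀ + ψ - ψ ^ 2) / (4 * ψ₀ ^ 2 * (1 - ψ)) * y := by
  have h1 : 1 - ψ ≠ 0 := by linarith
  have h2 : ψ₀ ≠ 0 := by linarith
  have hy : 0 < y := by linarith
  rw [remainder, cdf_of_lt_of_le_one hψ hψy (by linarith), cdf_of_le hy hyψ₀.le,
    cdfDeriv_of_lt hy hyψ₀]
  field_simp
  ring

theorem remainder_of_le_of_gt (hψ₀ : 0 ≤ ψ₀) (hψ₀y : ψ₀ < y) (hyψ : y ≤ ψ) (hψ : ψ < 1) :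
    remainder ψ₀ ψ y = (-4 * ψ₀ ^ 2 + 2 * ψ₀ + 3 * ψ - 1) / (4 * (1 - ψ₀) ^ 2)
      + (ψ₀ ^ 2 + 6 * ψ * ψ₀ - 2 * ψ₀ - 3 * ψ ^ 2 - 3 * ψ + 1) / (4 * ψ * (1 - ψ₀) ^ 2) * y := by
  have h1 : 1 - ψ₀ ≠ 0 := by linarith
  have h2 : ψ ≠ 0 := by linarith
  have hy : 0 < y := by linarith
  rw [remainder, cdf_of_le hy hyψ, cdf_of_lt_of_le_one hψ₀ hψ₀y (by linarith),
    cdfDeriv_of_gt hψ₀y (by linarith)]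
  field_simp
  ring

theorem integral_remainder_sq_of_lt (hψ : ψ ∈ Ioo 0 1) (hψ₀ : ψ₀ ∈ Ioo 0 1) (h : ψ < ψ₀) :
    ∫ y, remainder ψ₀ ψ y ^ 2 =
      -((ψ - ψ₀) ^ 3 * (4 * ψ * (ψ₀ - 1) + 12 * ψ₀ ^ 2 - 4 * ψ₀ + 1)) /
        (48 * (ψ - 1) * (ψ₀ - 1) * ψ₀ ^ 2) := by
  obtain ⟨hψ0, hψ1⟩ := hψ
  obtain ⟨hψ₀0, hψ₀1⟩ := hψ₀
  have hsupp : ∀ y ∉ Ioc (0 : ℝ) 1, remainder ψ₀ ψ y ^ 2 = 0 := fun y hy => by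
    rw [remainder_eq_zero_of_notMem_Ioc ⟨hψ0.le, hψ1.le⟩ ⟨hψ₀0.le, hψ₀1.le⟩ hy, sq, mul_zero]
  have lower := intervalIntegral_sq_of_eqOn_affine hψ0.le
    fun y hy => remainder_of_lt_of_lt hy.1 hy.2 (hy.2.trans h)
  have middle := intervalIntegral_sq_of_eqOn_affine h.le
    fun y hy => remainder_of_gt_of_lt hψ0.le hy.1 hy.2 hψ₀1.le
  have upper := intervalIntegral_sq_of_eqOn_affine hψ₀1.le
    fun y hy => remainder_of_gt_of_gt hψ0.le hψ₀0.le (h.trans hy.1) hy.1 hy.2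
  rw [integral_eq_add_add_of_eq_zero_off_Ioc zero_le_one hsupp lower.1 middle.1 upper.1,
    lower.2, middle.2, upper.2]
  have : ψ - 1 ≠ 0 := by linarith
  have : ψ₀ - 1 ≠ 0 := by linarith
  have : ψ ≠ 0 := by linarith
  have : ψ₀ ≠ 0 := by linarith
  field_simp
  ring

theorem integral_remainder_sq_of_le (hψ : ψ ∈ Ioo 0 1) (hψ₀ : ψ₀ ∈ Ioo 0 1) (h : ψ₀ ≤ ψ) :
    ∫ y, remainder ψ₀ ψ y ^ 2 =
      (ψ - ψ₀) ^ 3 * (12 * ψ * ψ₀ + 4 * ψ₀ ^ 2 - 8 * ψ₀ + 1) /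
        (48 * ψ * ψ₀ * (1 - ψ₀) ^ 2) := by
  obtain ⟨hψ0, hψ1⟩ := hψ
  obtain ⟨hψ₀0, hψ₀1⟩ := hψ₀
  have hsupp : ∀ y ∉ Ioc (0 : ℝ) 1, remainder ψ₀ ψ y ^ 2 = 0 := fun y hy => by
    rw [remainder_eq_zero_of_notMem_Ioc ⟨hψ0.le, hψ1.le⟩ ⟨hψ₀0.le, hψ₀1.le⟩ hy, sq, mul_zero]
  have lower := intervalIntegral_sq_of_eqOn_affine hψ₀0.le
    fun y hy => remainder_of_lt_of_lt hy.1 (hy.2.trans_le h) hy.2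
  have middle := intervalIntegral_sq_of_eqOn_affine h
    fun y hy => remainder_of_le_of_gt hψ₀0.le hy.1 hy.2.le hψ1
  have upper := intervalIntegral_sq_of_eqOn_affine hψ1.le
    fun y hy => remainder_of_gt_of_gt hψ0.le hψ₀0.le hy.1 (h.trans_lt hy.1) hy.2
  rw [integral_eq_add_add_of_eq_zero_off_Ioc zero_le_one hsupp lower.1 middle.1 upper.1,
    lower.2, middle.2, upper.2]
  have : ψ ≠ 0 := by linarith
  have : ψ₀ ≠ 0 := by linarith
  field_simp
  ring

end TwoSidedUniform

open TwoSidedUniform in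
/-- Norm-differentiability of the two-sided uniform cdf at every `ψ₀ ∈ (0,1)`
(Example 3.1(ii)): with the pointwise parameter derivative `D(y;ψ₀)` (set to `0`
at the kink `y = ψ₀` and off `(0,1)`) and remainder
`R(y;ψ,ψ₀) = F(y;ψ) − F(y;ψ₀) − (ψ−ψ₀)D(y;ψ₀)`, the squared `L²`-norm of `R` is given
by the stated cubic expressions, and `∫ R² dy / (ψ−ψ₀)² → 0` as `ψ → ψ₀`. -/
theorem stmt_15 (F : ℝ → ℝ → ℝ)
    (hF : ∀ y θ : ℝ, 0 < θ → θ < 1 →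
      F y θ = if y ≤ 0 then 0 else if y ≤ θ then y / (4 * θ)
        else if y ≤ 1 then 1 - 3 * (1 - y) / (4 * (1 - θ)) else 1)
    (ψ₀ : ℝ) (hψ₀ : ψ₀ ∈ Set.Ioo (0 : ℝ) 1)
    (D : ℝ → ℝ)
    (hD : ∀ y : ℝ, D y =
      if 0 < y ∧ y < ψ₀ then -y / (4 * ψ₀ ^ 2)
      else if ψ₀ < y ∧ y < 1 then -(3 * (1 - y)) / (4 * (1 - ψ₀) ^ 2) else 0)
    (R : ℝ → ℝ → ℝ)
    (hR : ∀ y ψ : ℝ, R y ψ = F y ψ - F y ψ₀ - (ψ - ψ₀) * D y) :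
    (∀ ψ ∈ Set.Ioo (0 : ℝ) 1, ψ < ψ₀ →
      ∫ y : ℝ, (R y ψ) ^ 2 =
        -((ψ - ψ₀) ^ 3 * (4 * ψ * (ψ₀ - 1) + 12 * ψ₀ ^ 2 - 4 * ψ₀ + 1)) /
          (48 * (ψ - 1) * (ψ₀ - 1) * ψ₀ ^ 2)) ∧
    (∀ ψ ∈ Set.Ioo (0 : ℝ) 1, ψ₀ ≤ ψ →
      ∫ y : ℝ, (R y ψ) ^ 2 =
        (ψ - ψ₀) ^ 3 * (12 * ψ * ψ₀ + 4 * ψ₀ ^ 2 - 8 * ψ₀ + 1) /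
          (48 * ψ * ψ₀ * (1 - ψ₀) ^ 2)) ∧
    Tendsto (fun ψ : ℝ => (∫ y : ℝ, (R y ψ) ^ 2) / (ψ - ψ₀) ^ 2) (𝓝[≠] ψ₀) (𝓝 0) := by
  have hR' : ∀ ψ ∈ Ioo (0 : ℝ) 1, ∫ y, R y ψ ^ 2 = ∫ y, remainder ψ₀ ψ y ^ 2 := fun ψ hψ => by
    simp only [hR, hF _ _ hψ.1 hψ.2, hF _ _ hψ₀.1 hψ₀.2, hD]
    rfl
  have below : ∀ ψ ∈ Ioo (0 : ℝ) 1, ψ < ψ₀ → _ := fun ψ hψ h =>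
    (hR' ψ hψ).trans (integral_remainder_sq_of_lt hψ hψ₀ h)
  have above : ∀ ψ ∈ Ioo (0 : ℝ) 1, ψ₀ ≤ ψ → _ := fun ψ hψ h =>
    (hR' ψ hψ).trans (integral_remainder_sq_of_le hψ hψ₀ h)
  refine ⟨below, above, ?_⟩
  rw [← nhdsLT_sup_nhdsGT]
  refine (tendsto_div_sq_of_eventuallyEq_cube_mul (nhdsLT_le_nhdsNE ψ₀) ?_
    (g := fun ψ => -(4 * ψ * (ψ₀ - 1) + 12 * ψ₀ ^ 2 - 4 * ψ₀ + 1) /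
      (48 * (ψ - 1) * (ψ₀ - 1) * ψ₀ ^ 2)) ?_).sup
    (tendsto_div_sq_of_eventuallyEq_cube_mul (nhdsGT_le_nhdsNE ψ₀) ?_
      (g := fun ψ => (12 * ψ * ψ₀ + 4 * ψ₀ ^ 2 - 8 * ψ₀ + 1) / (48 * ψ * ψ₀ * (1 - ψ₀) ^ 2)) ?_)
  · filter_upwards [Ioo_mem_nhdsLT hψ₀.1] with ψ hψ
    rw [below ψ ⟨hψ.1, hψ.2.trans hψ₀.2⟩ hψ.2]
    ring
  · exact ContinuousAt.div (by fun_prop) (by fun_prop) (by simp [hψ₀.1.ne', sub_ne_zero.2 hψ₀.2.ne])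
  · filter_upwards [Ioo_mem_nhdsGT hψ₀.2] with ψ hψ
    rw [above ψ ⟨hψ₀.1.trans hψ.1, hψ.2⟩ hψ.1.le]
    ring
  · exact ContinuousAt.div (by fun_prop) (by fun_prop) (by simp [hψ₀.1.ne', sub_ne_zero.2 hψ₀.2.ne'])
end

section
/- For θ ∈ (0,1) let F(y;θ) be the cdf of the two-sided uniform model (F(y;θ) = y/(4θ) for 0 < y ≤ θ, 1 − 3(1−y)/(4(1−θ)) for θ < y ≤ 1, 0 for y ≤ 0, 1 for y > 1), with quantile function F^{-1}(s;θ) = 4θs for 0 ≤ s ≤ 1/4 and F^{-1}(s;θ) = 1 − 4(1−θ)(1−s)/3 for 1/4 < s ≤ 1. Then for all ψ, ψ₀ ∈ (0,1): ∫_0^1 (F^{-1}(s;ψ) − F^{-1}(s;ψ₀))² ds = (ψ − ψ₀)²/3. -/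
/-!
For every `s`, the quantile `F⁻¹(s;θ)` is affine in `θ` with a slope `h(s)` that does not depend
on `θ` (`4s` on `[0, 1/4]`, `4(1 - s)/3` on `(1/4, 1]`). Hence the integrand is `(ψ - ψ₀)² h(s)²`,
and `∫₀¹ h² = 1/12 + 1/4 = 1/3`.
-/

open MeasureTheory Set
open scoped Interval

namespace intervalIntegral

theorem integral_ite_le {E : Type*} [NormedAddCommGroup E] [NormedSpace ℝ E]
    {f g : ℝ → E} {a b c : ℝ} (hac : a ≤ c) (hcb : c ≤ b)
    (hf : IntervalIntegrable f volume a c) (hg : IntervalIntegrable g volume c b) :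
    ∫ x in a..b, (if x ≤ c then f x else g x) = (∫ x in a..c, f x) + ∫ x in c..b, g x := by
  have hleft : EqOn (fun x => if x ≤ c then f x else g x) f (Ι a c) := by
    intro x hx
    rw [uIoc_of_le hac] at hx
    exact if_pos hx.2
  have hright : EqOn (fun x => if x ≤ c then f x else g x) g (Ι c b) := by
    intro x hx
    rw [uIoc_of_le hcb] at hx
    exact if_neg (not_le.mpr hx.1)
  rw [← integral_add_adjacent_intervals ((intervalIntegrable_congr hleft).mpr hf)
      ((intervalIntegrable_congr hright).mpr hg),
    integral_congr_ae (ae_of_all _ hleft), integral_congr_ae (ae_of_all _ hright)]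

end intervalIntegral

noncomputable def twoSidedUniformQuantile (θ s : ℝ) : ℝ :=
  if s ≤ 1 / 4 then 4 * θ * s else 1 - 4 * (1 - θ) * (1 - s) / 3

noncomputable def twoSidedUniformQuantileSlope (s : ℝ) : ℝ :=
  if s ≤ 1 / 4 then 4 * s else 4 * (1 - s) / 3

theorem twoSidedUniformQuantile_sub (ψ ψ₀ s : ℝ) :
    twoSidedUniformQuantile ψ s - twoSidedUniformQuantile ψ₀ s =
      (ψ - ψ₀) * twoSidedUniformQuantileSlope s := by
  unfold twoSidedUniformQuantile twoSidedUniformQuantileSlope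
  split_ifs <;> ring

theorem integral_twoSidedUniformQuantileSlope_sq :
    ∫ s in (0 : ℝ)..1, twoSidedUniformQuantileSlope s ^ 2 = 1 / 3 := by
  simp only [twoSidedUniformQuantileSlope, apply_ite (· ^ 2)]
  rw [intervalIntegral.integral_ite_le (by norm_num) (by norm_num)
    ((by fun_prop : Continuous _).intervalIntegrable _ _)
    ((by fun_prop : Continuous _).intervalIntegrable _ _)]
  have hreflect : ∫ s in (1 / 4 : ℝ)..1, (4 * (1 - s) / 3) ^ 2 =
      ∫ s in (0 : ℝ)..3 / 4, (4 * s / 3) ^ 2 := by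
    rw [intervalIntegral.integral_comp_sub_left (fun s => (4 * s / 3) ^ 2) 1]
    norm_num
  rw [hreflect]
  simp only [div_pow, mul_pow, intervalIntegral.integral_div, intervalIntegral.integral_const_mul,
    integral_pow]
  norm_num

theorem integral_sq_sub_twoSidedUniformQuantile (ψ ψ₀ : ℝ) :
    ∫ s in (0 : ℝ)..1, (twoSidedUniformQuantile ψ s - twoSidedUniformQuantile ψ₀ s) ^ 2 =
      (ψ - ψ₀) ^ 2 / 3 := by
  simp only [twoSidedUniformQuantile_sub, mul_pow, intervalIntegral.integral_const_mul,
    integral_twoSidedUniformQuantileSlope_sq]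
  ring

/-- The squared 2-Wasserstein distance between two two-sided uniform distributions with
parameters `ψ, ψ₀ ∈ (0,1)`: with quantile function `F⁻¹(s;θ) = 4θs` for `s ≤ 1/4` and
`1 − 4(1−θ)(1−s)/3` for `1/4 < s ≤ 1`, one has
`∫₀¹ (F⁻¹(s;ψ) − F⁻¹(s;ψ₀))² ds = (ψ−ψ₀)²/3`. -/
theorem stmt_16 (Finv : ℝ → ℝ → ℝ)
    (hFinv : ∀ θ : ℝ, 0 < θ → θ < 1 → ∀ s ∈ Set.Icc (0 : ℝ) 1,
      Finv s θ = if s ≤ 1 / 4 then 4 * θ * s else 1 - 4 * (1 - θ) * (1 - s) / 3)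
    (ψ ψ₀ : ℝ) (hψ : ψ ∈ Set.Ioo (0 : ℝ) 1) (hψ₀ : ψ₀ ∈ Set.Ioo (0 : ℝ) 1) :
    ∫ s in (0 : ℝ)..1, (Finv s ψ - Finv s ψ₀) ^ 2 = (ψ - ψ₀) ^ 2 / 3 := by
  have hquantile : EqOn (fun s => (Finv s ψ - Finv s ψ₀) ^ 2)
      (fun s => (twoSidedUniformQuantile ψ s - twoSidedUniformQuantile ψ₀ s) ^ 2)
      (uIcc 0 1) := by
    intro s hs
    rw [uIcc_of_le zero_le_one] at hs
    simp only [hFinv ψ hψ.1 hψ.2 s hs, hFinv ψ₀ hψ₀.1 hψ₀.2 s hs, twoSidedUniformQuantile]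
  rw [intervalIntegral.integral_congr hquantile, integral_sq_sub_twoSidedUniformQuantile]
end
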